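/- arXiv:1710.02690 — 7 statements merged into one kernel-verified Lean document; each statement's English description precedes it below -/
import Mathlib

section
/- Let $G^*$ be a graph on $M$ vertices whose connected components are cliques, with $n_1^*$ singletons, $n_2^*$ cliques of size 2, $n_3^*$ cliques of size 3, and $n_i^*$ cliques of size $i$ for $i \ge 4$. Let $G'$ be obtained by independently retaining each edge of $G^*$ with probability $p \in (0,1]$, and assume every clique of size $\geq 4$ remains connected in $G'$. Let $n_i'$ be the number of connected components of size $i$ in $G'$. Then the estimator $\mathrm{LSHE} = n_1' + n_2' \cdot \frac{2p-1}{p} + n_3' \cdot \frac{1 - 6(1-p)^2 p}{p^2(3-2p)} + \sum_{i \ge 4} n_i'$ satisfies $\mathbb{E}[\mathrm{LSHE}] = \sum_i n_i^*$, i.e., it is an unbiased estimator of the number of connected components of $G^*$. -/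
/-!
By linearity of expectation it suffices that every clique of `G*` contributes `1` to `LSHE` on
average. Singletons and cliques of size at least four contribute exactly one component. A
2-clique survives with probability `p` and is then counted `(2p - 1)/p`, otherwise it leaves two
singletons: `p · (2p - 1)/p + 2(1 - p) = 1`. A triangle keeps no edge with probability
`(1 - p)³` (three singletons), exactly one with probability `3p(1 - p)²` (an edge and a
singleton, counted `1 + (2p - 1)/p`), and at least two with probability `p²(3 - 2p)`; the weight
of `n₃'` is exactly what makes the expected contribution `1`.
-/

open Finset

section ProductWeight

variable {ι α : Type*} [Fintype ι] [DecidableEq ι] [Fintype α]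

theorem sum_prod_weight_eq_one {μ : α → ℝ} (hμ : ∑ a, μ a = 1) :
    ∑ x : ι → α, ∏ i, μ (x i) = 1 := by
  rw [← Fintype.prod_sum, hμ, prod_const_one]

theorem sum_prod_weight_mul_apply {μ : α → ℝ} (hμ : ∑ a, μ a = 1) (g : α → ℝ) (i : ι) :
    ∑ x : ι → α, (∏ j, μ (x j)) * g (x i) = ∑ a, μ a * g a := by
  have hsingle : ∀ x : ι → α,
      (∏ j, μ (x j)) * g (x i) = ∏ j, μ (x j) * if j = i then g (x j) else 1 := by
    intro x
    rw [prod_mul_distrib, Fintype.prod_ite_eq']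
  rw [sum_congr rfl fun x _ => hsingle x,
    ← Fintype.prod_sum fun j a => μ a * if j = i then g a else 1]
  simp_rw [mul_ite, mul_one, sum_ite_irrel, hμ]
  exact Fintype.prod_ite_eq' i _

theorem sum_prod_weight_mul_sum_apply {μ : α → ℝ} (hμ : ∑ a, μ a = 1) (g : α → ℝ) :
    ∑ x : ι → α, (∏ j, μ (x j)) * ∑ i, g (x i) = Fintype.card ι * ∑ a, μ a * g a := by
  calc ∑ x : ι → α, (∏ j, μ (x j)) * ∑ i, g (x i)
      = ∑ i, ∑ x : ι → α, (∏ j, μ (x j)) * g (x i) := by simp_rw [mul_sum]; exact sum_comm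
    _ = Fintype.card ι * ∑ a, μ a * g a := by
      simp only [sum_prod_weight_mul_apply hμ, sum_const, card_univ, nsmul_eq_mul]

end ProductWeight

theorem Fintype.sum_prod_mul_add {β γ : Type*} [Fintype β] [Fintype γ] {a : β → ℝ} {b : γ → ℝ}
    (ha : ∑ x, a x = 1) (hb : ∑ y, b y = 1) (f : β → ℝ) (g : γ → ℝ) :
    ∑ ω : β × γ, a ω.1 * b ω.2 * (f ω.1 + g ω.2) = ∑ x, a x * f x + ∑ y, b y * g y := by
  simp only [Fintype.sum_prod_type, mul_add, sum_add_distrib]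
  rw [sum_comm (f := fun x y => a x * b y * g y)]
  simp only [mul_comm (a _) (b _), mul_assoc, ← mul_sum, ← sum_mul, ha, hb, one_mul]

theorem Fin.sum_univ_pi_succ {n : ℕ} {β M : Type*} [Fintype β] [AddCommMonoid M]
    (f : (Fin (n + 1) → β) → M) :
    ∑ x, f x = ∑ b, ∑ y : Fin n → β, f (Fin.cons b y) := by
  rw [← (Fin.consEquiv fun _ => β).sum_comp, Fintype.sum_prod_type]
  rfl

theorem Fin.sum_univ_pi_three {β M : Type*} [Fintype β] [AddCommMonoid M]
    (f : (Fin 3 → β) → M) : ∑ y, f y = ∑ a, ∑ b, ∑ c, f ![a, b, c] := by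
  simp only [Fin.sum_univ_pi_succ, Fintype.sum_unique]
  rfl

def bernoulliWeight (p : ℝ) (b : Bool) : ℝ := if b then p else 1 - p

theorem sum_bernoulliWeight (p : ℝ) : ∑ b, bernoulliWeight p b = 1 := by
  simp [bernoulliWeight]

theorem sum_prod_bernoulliWeight_mul_card_fin_three (p : ℝ) (f : ℕ → ℝ) :
    ∑ t : Fin 3 → Bool, (∏ e, bernoulliWeight p (t e)) * f #{e | t e} =
      (1 - p) ^ 3 * f 0 + 3 * p * (1 - p) ^ 2 * f 1 + 3 * p ^ 2 * (1 - p) * f 2 + p ^ 3 * f 3 := by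
  simp only [Fin.sum_univ_pi_three, Fintype.sum_bool, Fin.prod_univ_three, card_filter,
    Fin.sum_univ_three, Matrix.cons_val_zero, Matrix.cons_val_one, Matrix.cons_val_two,
    Matrix.head_cons, Matrix.tail_cons, bernoulliWeight]
  norm_num
  ring

noncomputable section Contribution

variable (p : ℝ)

/- What a 2-clique, resp. a triangle keeping `k` of its edges, contributes to `LSHE`. -/
def pairContribution (b : Bool) : ℝ := if b then (2 * p - 1) / p else 2

def triangleContribution (k : ℕ) : ℝ :=
  if k = 0 then 3
  else if k = 1 then 1 + (2 * p - 1) / p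
  else (1 - 6 * (1 - p) ^ 2 * p) / (p ^ 2 * (3 - 2 * p))

variable {p}

theorem sum_bernoulliWeight_mul_pairContribution (hp : p ≠ 0) :
    ∑ b, bernoulliWeight p b * pairContribution p b = 1 := by
  have hα : (2 * p - 1) / p * p = 2 * p - 1 := div_mul_cancel₀ _ hp
  simp only [Fintype.sum_bool, bernoulliWeight, pairContribution, if_true, Bool.false_eq_true,
    if_false]
  linear_combination hα

theorem sum_prod_bernoulliWeight_mul_triangleContribution (hp : p ≠ 0) (hp' : 3 - 2 * p ≠ 0) :
    ∑ t : Fin 3 → Bool, (∏ e, bernoulliWeight p (t e)) * triangleContribution p #{e | t e} = 1 := by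
  have hα : (2 * p - 1) / p * p = 2 * p - 1 := div_mul_cancel₀ _ hp
  have hβ : (1 - 6 * (1 - p) ^ 2 * p) / (p ^ 2 * (3 - 2 * p)) * (p ^ 2 * (3 - 2 * p)) =
      1 - 6 * (1 - p) ^ 2 * p := div_mul_cancel₀ _ (mul_ne_zero (pow_ne_zero 2 hp) hp')
  rw [sum_prod_bernoulliWeight_mul_card_fin_three]
  simp only [triangleContribution, reduceIte, OfNat.ofNat_ne_zero, OfNat.ofNat_ne_one,
    one_ne_zero]
  linear_combination 3 * (1 - p) ^ 2 * hα + hβ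

variable {ι : Type*} [Fintype ι]

theorem sum_pairContribution (x : ι → Bool) :
    ∑ i, pairContribution p (x i) =
      (2 * p - 1) / p * #{i | x i = true} + 2 * #{i | x i = false} := by
  simp only [pairContribution, sum_ite, sum_const, nsmul_eq_mul, Bool.not_eq_true]
  ring

theorem sum_triangleContribution (k : ι → ℕ) :
    ∑ i, triangleContribution p (k i) =
      3 * #{i | k i = 0} + (1 + (2 * p - 1) / p) * #{i | k i = 1} +
        (1 - 6 * (1 - p) ^ 2 * p) / (p ^ 2 * (3 - 2 * p)) * #{i | 2 ≤ k i} := by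
  simp only [card_filter, Nat.cast_sum, Nat.cast_ite, Nat.cast_one, Nat.cast_zero, mul_sum,
    ← sum_add_distrib]
  refine sum_congr rfl fun i _ => ?_
  unfold triangleContribution
  split_ifs <;> first | omega | ring

end Contribution

/-- Unbiasedness of the LSHE estimator. The graph `G*` is a disjoint union of
cliques: `n1` singletons, `n2` 2-cliques, `n3` 3-cliques, and `nstar i` cliques of
size `i` for `4 ≤ i ≤ M`. Each edge is retained independently with probability `p`,
and cliques of size ≥ 4 remain connected (so they contribute exactly
`∑_{i=4}^{M} nstar i` components of size ≥ 4 in every outcome). Then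
`E[LSHE] = n1 + n2 + n3 + ∑_{i=4}^{M} nstar i`, the number of connected
components of `G*`. -/
theorem stmt_3 (n1 n2 n3 M : ℕ) (nstar : ℕ → ℕ) (p : ℝ) (hp : p ∈ Set.Ioc (0 : ℝ) 1) :
    let Ω := (Fin n2 → Bool) × (Fin n3 → Fin 3 → Bool)
    let w : Ω → ℝ := fun ω =>
      (∏ i, if ω.1 i then p else 1 - p) * ∏ i, ∏ e, if ω.2 i e then p else 1 - p
    let c : Ω → Fin n3 → ℕ := fun ω i => (Finset.univ.filter (fun e => ω.2 i e = true)).card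
    let n3' : Ω → ℝ := fun ω => ((Finset.univ.filter (fun i => 2 ≤ c ω i)).card : ℝ)
    let n2' : Ω → ℝ := fun ω =>
      ((Finset.univ.filter (fun i => ω.1 i = true)).card : ℝ) +
      ((Finset.univ.filter (fun i => c ω i = 1)).card : ℝ)
    let n1' : Ω → ℝ := fun ω =>
      (n1 : ℝ) + 2 * ((Finset.univ.filter (fun i => ω.1 i = false)).card : ℝ) +
      ((Finset.univ.filter (fun i => c ω i = 1)).card : ℝ) +
      3 * ((Finset.univ.filter (fun i => c ω i = 0)).card : ℝ)
    let LSHE : Ω → ℝ := fun ω =>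
      n1' ω + n2' ω * ((2 * p - 1) / p) +
      n3' ω * ((1 - 6 * (1 - p) ^ 2 * p) / (p ^ 2 * (3 - 2 * p))) +
      ∑ i ∈ Finset.Icc 4 M, (nstar i : ℝ)
    (∑ ω, w ω * LSHE ω)
      = (n1 : ℝ) + n2 + n3 + ∑ i ∈ Finset.Icc 4 M, (nstar i : ℝ) := by
  intro Ω w c n3' n2' n1' LSHE
  obtain ⟨hp0, hp1⟩ := hp
  set S := ∑ i ∈ Finset.Icc 4 M, (nstar i : ℝ)
  have hE := sum_bernoulliWeight p
  have hT : ∑ t : Fin 3 → Bool, ∏ e, bernoulliWeight p (t e) = 1 := sum_prod_weight_eq_one hE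
  have hsplit : ∀ ω : Ω, w ω * LSHE ω =
      (∏ i, bernoulliWeight p (ω.1 i)) * (∏ i, ∏ e, bernoulliWeight p (ω.2 i e)) *
        ((n1 + S + ∑ i, pairContribution p (ω.1 i)) +
          ∑ i, triangleContribution p #{e | ω.2 i e}) := by
    intro ω
    rw [sum_pairContribution, sum_triangleContribution]
    simp only [w, LSHE, n1', n2', n3', c, bernoulliWeight]
    ring
  rw [Fintype.sum_congr _ _ hsplit,
    Fintype.sum_prod_mul_add (sum_prod_weight_eq_one hE) (sum_prod_weight_eq_one hT)
      (fun x => n1 + S + ∑ i, pairContribution p (x i))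
      fun y => ∑ i, triangleContribution p #{e | y i e},
    sum_prod_weight_mul_sum_apply hT fun t => triangleContribution p #{e | t e},
    sum_prod_bernoulliWeight_mul_triangleContribution hp0.ne' (by linarith)]
  simp only [mul_add, sum_add_distrib, ← sum_mul, sum_prod_weight_eq_one hE,
    sum_prod_weight_mul_sum_apply hE, sum_bernoulliWeight_mul_pairContribution hp0.ne',
    Fintype.card_fin]
  ring
end

section
/- Under the same edge-sampling model (each edge kept independently with probability $p \in (0,1]$, cliques of size $\geq 4$ never break), the variance of the estimator $\mathrm{LSHE}$ equals $n_3^* \cdot \frac{(p-1)^2 (3p^2 - p + 1)}{p^2 (3-2p)} + n_2^* \cdot \frac{1-p}{p}$. -/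
/-!
`LSHE` splits into independent per-clique contributions: the constant `n₁ + S` from singletons
and cliques of size at least 4, one term per 2-clique depending only on whether its edge
survives, and one term per 3-clique depending only on how many of its edges survive. Variances
of independent summands add, so `Var LSHE = n₂ · Var(pair term) + n₃ · Var(triangle term)`,
and both variances are explicit finite computations (a Bernoulli(p), resp. Binomial(3, p),
number of surviving edges). Both terms have mean 1, which is the unbiasedness of `LSHE`.
-/

open Finset

section WeightedVariance

variable {Ω Ω₁ Ω₂ : Type*} [Fintype Ω] [Fintype Ω₁] [Fintype Ω₂]

noncomputable def wMean (w f : Ω → ℝ) : ℝ := ∑ x, w x * f x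

noncomputable def wVar (w f : Ω → ℝ) : ℝ := wMean w fun x => (f x - wMean w f) ^ 2

theorem wMean_equiv_comp (e : Ω₁ ≃ Ω₂) (w f : Ω₂ → ℝ) : wMean (w ∘ e) (f ∘ e) = wMean w f :=
  e.sum_comp fun x => w x * f x

theorem wVar_equiv_comp (e : Ω₁ ≃ Ω₂) (w f : Ω₂ → ℝ) : wVar (w ∘ e) (f ∘ e) = wVar w f := by
  rw [wVar, wMean_equiv_comp]
  exact wMean_equiv_comp e w fun x => (f x - wMean w f) ^ 2

theorem sum_mul_sub_wMean {w : Ω → ℝ} (hw : ∑ x, w x = 1) (f : Ω → ℝ) :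
    ∑ x, w x * (f x - wMean w f) = 0 := by
  simp only [mul_sub, sum_sub_distrib, ← sum_mul, hw, one_mul, wMean, sub_self]

theorem wMean_const_add {w : Ω → ℝ} (hw : ∑ x, w x = 1) (C : ℝ) (f : Ω → ℝ) :
    wMean w (fun x => C + f x) = C + wMean w f := by
  simp only [wMean, mul_add, sum_add_distrib, ← sum_mul, hw, one_mul]

theorem wVar_const_add {w : Ω → ℝ} (hw : ∑ x, w x = 1) (C : ℝ) (f : Ω → ℝ) :
    wVar w (fun x => C + f x) = wVar w f := by
  simp only [wVar, wMean_const_add hw, add_sub_add_left_eq_sub]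

theorem sum_mul_prod_eq_one {w₁ : Ω₁ → ℝ} {w₂ : Ω₂ → ℝ} (h₁ : ∑ a, w₁ a = 1)
    (h₂ : ∑ b, w₂ b = 1) : ∑ q : Ω₁ × Ω₂, w₁ q.1 * w₂ q.2 = 1 := by
  rw [Fintype.sum_prod_type, ← Fintype.sum_mul_sum, h₁, h₂, one_mul]

theorem wMean_prod_add {w₁ : Ω₁ → ℝ} {w₂ : Ω₂ → ℝ} (h₁ : ∑ a, w₁ a = 1) (h₂ : ∑ b, w₂ b = 1)
    (f : Ω₁ → ℝ) (g : Ω₂ → ℝ) :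
    wMean (fun q : Ω₁ × Ω₂ => w₁ q.1 * w₂ q.2) (fun q => f q.1 + g q.2)
      = wMean w₁ f + wMean w₂ g := by
  simp only [wMean, Fintype.sum_prod_type, mul_add, sum_add_distrib]
  simp only [mul_right_comm _ _ (f _), mul_assoc, ← mul_sum, ← sum_mul, h₁, h₂, mul_one, one_mul]

theorem wVar_prod_add {w₁ : Ω₁ → ℝ} {w₂ : Ω₂ → ℝ} (h₁ : ∑ a, w₁ a = 1) (h₂ : ∑ b, w₂ b = 1)
    (f : Ω₁ → ℝ) (g : Ω₂ → ℝ) :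
    wVar (fun q : Ω₁ × Ω₂ => w₁ q.1 * w₂ q.2) (fun q => f q.1 + g q.2)
      = wVar w₁ f + wVar w₂ g := by
  rw [wVar, wVar, wVar, wMean_prod_add h₁ h₂]
  set a := wMean w₁ f
  set b := wMean w₂ g
  have expand : ∀ x y, w₁ x * w₂ y * (f x + g y - (a + b)) ^ 2
      = (w₁ x * (f x - a) ^ 2) * w₂ y + w₁ x * (w₂ y * (g y - b) ^ 2)
        + 2 * (w₁ x * (f x - a)) * (w₂ y * (g y - b)) := fun x y => by ring
  simp only [wMean, Fintype.sum_prod_type, expand, sum_add_distrib, ← mul_sum, ← sum_mul, h₂]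
  rw [sum_mul_sub_wMean h₂]
  simp [h₁]

theorem sum_pi_prod_eq_one {ι X : Type*} [Fintype ι] [DecidableEq ι] [Fintype X] {w : X → ℝ}
    (hw : ∑ x, w x = 1) : ∑ g : ι → X, ∏ i, w (g i) = 1 := by
  rw [← Fintype.prod_sum (fun _ => w), hw, prod_const_one]

theorem wVar_pi_sum {X : Type*} [Fintype X] {w : X → ℝ} (hw : ∑ x, w x = 1) (f : X → ℝ) (n : ℕ) :
    wVar (fun g : Fin n → X => ∏ i, w (g i)) (fun g => ∑ i, f (g i)) = n * wVar w f := by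
  induction n with
  | zero => simp [wVar, wMean]
  | succ n ih =>
    rw [← wVar_equiv_comp (Fin.consEquiv fun _ => X)]
    simp only [Function.comp_def, Fin.consEquiv_apply, Fin.prod_univ_succ, Fin.sum_univ_succ,
      Fin.cons_zero, Fin.cons_succ]
    rw [wVar_prod_add hw (sum_pi_prod_eq_one hw) f fun t => ∑ i, f (t i), ih]
    push_cast
    ring

end WeightedVariance

section CliqueSampling

variable (p : ℝ)

noncomputable def keepWeight (b : Bool) : ℝ := if b then p else 1 - p

/-- Contribution of a 2-clique to `LSHE`: two singletons if its edge is lost. -/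
noncomputable def pairTerm (b : Bool) : ℝ := if b then (2 * p - 1) / p else 2

noncomputable def triangleWeight (g : Fin 3 → Bool) : ℝ := ∏ e, keepWeight p (g e)

def numKept (g : Fin 3 → Bool) : ℕ := (Finset.univ.filter fun e => g e = true).card

/-- Contribution to `LSHE` of a 3-clique with `m` surviving edges: it stays connected if `2 ≤ m`,
splits into an edge and a singleton if `m = 1`, and into three singletons if `m = 0`. -/
noncomputable def triangleCoeff (m : ℕ) : ℝ :=
  if 2 ≤ m then (1 - 6 * (1 - p) ^ 2 * p) / (p ^ 2 * (3 - 2 * p))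
  else if m = 1 then 1 + (2 * p - 1) / p else 3

theorem triangleCoeff_zero : triangleCoeff p 0 = 3 := by
  simp [triangleCoeff]

theorem triangleCoeff_one : triangleCoeff p 1 = 1 + (2 * p - 1) / p := by
  simp [triangleCoeff]

theorem triangleCoeff_of_two_le {m : ℕ} (hm : 2 ≤ m) :
    triangleCoeff p m = (1 - 6 * (1 - p) ^ 2 * p) / (p ^ 2 * (3 - 2 * p)) :=
  if_pos hm

noncomputable def triangleTerm (g : Fin 3 → Bool) : ℝ := triangleCoeff p (numKept g)

theorem sum_keepWeight : ∑ b, keepWeight p b = 1 := by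
  simp [keepWeight]

theorem sum_triangleWeight : ∑ g, triangleWeight p g = 1 :=
  sum_pi_prod_eq_one (sum_keepWeight p)

theorem sum_triangleWeight_mul (φ : ℕ → ℝ) :
    ∑ g, triangleWeight p g * φ (numKept g)
      = (1 - p) ^ 3 * φ 0 + 3 * p * (1 - p) ^ 2 * φ 1 + 3 * p ^ 2 * (1 - p) * φ 2 + p ^ 3 * φ 3 := by
  let tripleEquiv : Bool × Bool × Bool ≃ (Fin 3 → Bool) :=
    ⟨fun q => ![q.1, q.2.1, q.2.2], fun g => (g 0, g 1, g 2), by decide, by decide⟩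
  have numKept_cons : ∀ a b c : Bool, numKept ![a, b, c] = a.toNat + b.toNat + c.toNat := by
    decide
  rw [← tripleEquiv.sum_comp]
  simp [Fintype.sum_prod_type, tripleEquiv, numKept_cons, triangleWeight, keepWeight,
    Fin.prod_univ_three]
  ring

variable {p}

theorem wMean_pairTerm (hp : p ≠ 0) : wMean (keepWeight p) (pairTerm p) = 1 := by
  simp [wMean, keepWeight, pairTerm]
  field_simp
  ring

theorem wVar_pairTerm (hp : p ≠ 0) : wVar (keepWeight p) (pairTerm p) = (1 - p) / p := by
  rw [wVar, wMean_pairTerm hp]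
  simp [wMean, keepWeight, pairTerm]
  field_simp
  ring

theorem wMean_triangleTerm (hp : p ≠ 0) (hp' : 3 - 2 * p ≠ 0) :
    wMean (triangleWeight p) (triangleTerm p) = 1 := by
  simp only [wMean, triangleTerm]
  rw [sum_triangleWeight_mul p (triangleCoeff p), triangleCoeff_zero, triangleCoeff_one, triangleCoeff_of_two_le p le_rfl,
    triangleCoeff_of_two_le p (by norm_num)]
  -- `field_simp` normalises `3 - 2 * p` to `3 - p * 2` and only then looks for `hp'`
  field_simp [mul_comm 2 p] at hp' ⊢
  ring

theorem wVar_triangleTerm (hp : p ≠ 0) (hp' : 3 - 2 * p ≠ 0) :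
    wVar (triangleWeight p) (triangleTerm p)
      = (p - 1) ^ 2 * (3 * p ^ 2 - p + 1) / (p ^ 2 * (3 - 2 * p)) := by
  rw [wVar, wMean_triangleTerm hp hp']
  simp only [wMean, triangleTerm]
  rw [sum_triangleWeight_mul p fun m => (triangleCoeff p m - 1) ^ 2, triangleCoeff_zero, triangleCoeff_one, triangleCoeff_of_two_le p le_rfl,
    triangleCoeff_of_two_le p (by norm_num)]
  field_simp [mul_comm 2 p] at hp' ⊢
  ring

variable (p)

theorem card_pairs_eq_sum_pairTerm {ι : Type*} [Fintype ι] (α : ι → Bool) :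
    2 * ((Finset.univ.filter fun i => α i = false).card : ℝ)
      + ((Finset.univ.filter fun i => α i = true).card : ℝ) * ((2 * p - 1) / p)
      = ∑ i, pairTerm p (α i) := by
  simp only [natCast_card_filter, mul_sum, sum_mul, ← sum_add_distrib]
  refine sum_congr rfl fun i _ => ?_
  cases α i <;> simp [pairTerm]

theorem card_triangles_eq_sum_triangleCoeff {ι : Type*} [Fintype ι] (m : ι → ℕ) :
    ((Finset.univ.filter fun i => m i = 1).card : ℝ)
      + 3 * ((Finset.univ.filter fun i => m i = 0).card : ℝ)
      + ((Finset.univ.filter fun i => m i = 1).card : ℝ) * ((2 * p - 1) / p)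
      + ((Finset.univ.filter fun i => 2 ≤ m i).card : ℝ)
          * ((1 - 6 * (1 - p) ^ 2 * p) / (p ^ 2 * (3 - 2 * p)))
      = ∑ i, triangleCoeff p (m i) := by
  simp only [natCast_card_filter, mul_sum, sum_mul, ← sum_add_distrib]
  refine sum_congr rfl fun i _ => ?_
  rcases Nat.lt_or_ge (m i) 2 with h | h
  · interval_cases m i <;> simp [triangleCoeff_zero, triangleCoeff_one]
  · simp [triangleCoeff_of_two_le p h, h, show m i ≠ 0 by omega, show m i ≠ 1 by omega]

end CliqueSampling

theorem stmt_4_general (n1 n2 n3 : ℕ) (S p : ℝ) (hp : p ∈ Set.Ioc (0 : ℝ) 1) :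
    let Ω := (Fin n2 → Bool) × (Fin n3 → Fin 3 → Bool)
    let w : Ω → ℝ := fun ω =>
      (∏ i, if ω.1 i then p else 1 - p) * ∏ i, ∏ e, if ω.2 i e then p else 1 - p
    -- number of surviving edges of the i-th 3-clique
    let c : Ω → Fin n3 → ℕ := fun ω i => (Finset.univ.filter (fun e => ω.2 i e = true)).card
    let n3' : Ω → ℝ := fun ω => ((Finset.univ.filter (fun i => 2 ≤ c ω i)).card : ℝ)
    let n2' : Ω → ℝ := fun ω =>
      ((Finset.univ.filter (fun i => ω.1 i = true)).card : ℝ) +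
      ((Finset.univ.filter (fun i => c ω i = 1)).card : ℝ)
    let n1' : Ω → ℝ := fun ω =>
      (n1 : ℝ) + 2 * ((Finset.univ.filter (fun i => ω.1 i = false)).card : ℝ) +
      ((Finset.univ.filter (fun i => c ω i = 1)).card : ℝ) +
      3 * ((Finset.univ.filter (fun i => c ω i = 0)).card : ℝ)
    let LSHE : Ω → ℝ := fun ω =>
      n1' ω + n2' ω * ((2 * p - 1) / p) +
      n3' ω * ((1 - 6 * (1 - p) ^ 2 * p) / (p ^ 2 * (3 - 2 * p))) + S
    (∑ ω, w ω * (LSHE ω - ∑ ω', w ω' * LSHE ω') ^ 2)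
      = n3 * ((p - 1) ^ 2 * (3 * p ^ 2 - p + 1) / (p ^ 2 * (3 - 2 * p)))
        + n2 * ((1 - p) / p) := by
  intro Ω w c n3' n2' n1' LSHE
  obtain ⟨hp0, hp1⟩ := hp
  have hp3 : 3 - 2 * p ≠ 0 := by linarith
  have hpairs := sum_pi_prod_eq_one (ι := Fin n2) (sum_keepWeight p)
  have htriangles := sum_pi_prod_eq_one (ι := Fin n3) (sum_triangleWeight p)
  have hw : w = fun ω => (∏ i, keepWeight p (ω.1 i)) * ∏ i, triangleWeight p (ω.2 i) := rfl
  have hLSHE : LSHE = fun ω : Ω =>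
      (n1 + S) + ((∑ i, pairTerm p (ω.1 i)) + ∑ i, triangleTerm p (ω.2 i)) := by
    funext ω
    have hpair := card_pairs_eq_sum_pairTerm p ω.1
    have htriangle := card_triangles_eq_sum_triangleCoeff p (c ω)
    simp only [LSHE, n1', n2', n3', c, triangleTerm, numKept] at htriangle ⊢
    linear_combination hpair + htriangle
  calc _ = wVar w LSHE := rfl
    _ = wVar w fun ω : Ω => (∑ i, pairTerm p (ω.1 i)) + ∑ i, triangleTerm p (ω.2 i) := by
      rw [hLSHE, hw, wVar_const_add (sum_mul_prod_eq_one hpairs htriangles)]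
    _ = n2 * wVar (keepWeight p) (pairTerm p) + n3 * wVar (triangleWeight p) (triangleTerm p) := by
      rw [hw, wVar_prod_add hpairs htriangles (fun α => ∑ i, pairTerm p (α i))
        (fun β => ∑ i, triangleTerm p (β i)), wVar_pi_sum (sum_keepWeight p),
        wVar_pi_sum (sum_triangleWeight p)]
    _ = _ := by
      rw [wVar_pairTerm hp0.ne', wVar_triangleTerm hp0.ne' hp3]
      ring

/-- Variance of the LSHE estimator in the edge-sampling model: the graph is a
disjoint union of cliques (`n1` singletons, `n2` 2-cliques, `n3` 3-cliques, and
cliques of size ≥ 4 which never break apart, contributing the constant `S` to the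
estimator); each edge is kept independently with probability `p`. Then
`Var[LSHE] = n₃ (p-1)²(3p²-p+1)/(p²(3-2p)) + n₂ (1-p)/p`. -/
theorem stmt_4 (n1 n2 n3 : ℕ) (S p : ℝ) (hS : 0 ≤ S) (hp : p ∈ Set.Ioc (0 : ℝ) 1) :
    let Ω := (Fin n2 → Bool) × (Fin n3 → Fin 3 → Bool)
    let w : Ω → ℝ := fun ω =>
      (∏ i, if ω.1 i then p else 1 - p) * ∏ i, ∏ e, if ω.2 i e then p else 1 - p
    -- number of surviving edges of the i-th 3-clique
    let c : Ω → Fin n3 → ℕ := fun ω i => (Finset.univ.filter (fun e => ω.2 i e = true)).card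
    let n3' : Ω → ℝ := fun ω => ((Finset.univ.filter (fun i => 2 ≤ c ω i)).card : ℝ)
    let n2' : Ω → ℝ := fun ω =>
      ((Finset.univ.filter (fun i => ω.1 i = true)).card : ℝ) +
      ((Finset.univ.filter (fun i => c ω i = 1)).card : ℝ)
    let n1' : Ω → ℝ := fun ω =>
      (n1 : ℝ) + 2 * ((Finset.univ.filter (fun i => ω.1 i = false)).card : ℝ) +
      ((Finset.univ.filter (fun i => c ω i = 1)).card : ℝ) +
      3 * ((Finset.univ.filter (fun i => c ω i = 0)).card : ℝ)
    let LSHE : Ω → ℝ := fun ω =>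
      n1' ω + n2' ω * ((2 * p - 1) / p) +
      n3' ω * ((1 - 6 * (1 - p) ^ 2 * p) / (p ^ 2 * (3 - 2 * p))) + S
    (∑ ω, w ω * (LSHE ω - ∑ ω', w ω' * LSHE ω') ^ 2)
      = n3 * ((p - 1) ^ 2 * (3 * p ^ 2 - p + 1) / (p ^ 2 * (3 - 2 * p)))
        + n2 * ((1 - p) / p) :=
  stmt_4_general n1 n2 n3 S p hp
end

section
/- The function $V(p) = a \cdot \frac{(p-1)^2 (3p^2 - p + 1)}{p^2 (3-2p)} + b \cdot \frac{1-p}{p}$, for fixed nonnegative constants $a, b$ (not both zero), is monotonically decreasing in $p$ on the interval $(0,1]$. -/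
/-!
Each coefficient of `V` is strictly decreasing on `(0, 1]`. For the `b`-coefficient
`(1 - p) / p = p⁻¹ - 1` this is immediate. The `a`-coefficient has derivative
`-3 (1 - p) (2 - p) (2 p³ - p + 1) / (p³ (3 - 2p)²)`, negative on `(0, 1)`, since
`2 p³ - p + 1 = 2 p³ + (1 - p)`. A nonnegative, nontrivial combination of strictly
decreasing functions is strictly decreasing.
-/

open Set

namespace LSHEVariance

-- The coefficients of `a = n₃*` and `b = n₂*` in `V(p)`.
noncomputable def tripleCoeff (p : ℝ) : ℝ :=
  (p - 1) ^ 2 * (3 * p ^ 2 - p + 1) / (p ^ 2 * (3 - 2 * p))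

noncomputable def pairCoeff (p : ℝ) : ℝ :=
  (1 - p) / p

theorem hasDerivAt_tripleCoeff {p : ℝ} (hp : p ≠ 0) (hp' : 3 - 2 * p ≠ 0) :
    HasDerivAt tripleCoeff
      (-(3 * (1 - p) * (2 - p) * (2 * p ^ 3 - p + 1)) / (p ^ 3 * (3 - 2 * p) ^ 2)) p := by
  have hx := hasDerivAt_id' p
  have hnum := ((hx.sub_const 1).fun_pow 2).fun_mul
    (((hx.fun_pow 2).const_mul 3).fun_sub hx |>.add_const 1)
  have hden := (hx.fun_pow 2).fun_mul ((hx.const_mul 2).const_sub 3)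
  refine (hnum.fun_div hden (mul_ne_zero (pow_ne_zero 2 hp) hp')).congr_deriv ?_
  field_simp
  ring

theorem tripleCoeff_strictAntiOn : StrictAntiOn tripleCoeff (Ioc 0 1) := by
  have hderiv : ∀ p ∈ Ioc (0 : ℝ) 1, HasDerivAt tripleCoeff
      (-(3 * (1 - p) * (2 - p) * (2 * p ^ 3 - p + 1)) / (p ^ 3 * (3 - 2 * p) ^ 2)) p :=
    fun p ⟨hp0, hp1⟩ => hasDerivAt_tripleCoeff hp0.ne' (by linarith)
  refine strictAntiOn_of_deriv_neg (convex_Ioc 0 1)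
    (fun p hp => (hderiv p hp).continuousAt.continuousWithinAt) fun p hp => ?_
  rw [interior_Ioc] at hp
  obtain ⟨hp0, hp1⟩ := hp
  rw [(hderiv p ⟨hp0, hp1.le⟩).deriv]
  have hcubic : 0 < 2 * p ^ 3 - p + 1 := by nlinarith [pow_pos hp0 3]
  refine div_neg_of_neg_of_pos (neg_neg_of_pos ?_) ?_
  · exact mul_pos (mul_pos (mul_pos three_pos (by linarith)) (by linarith)) hcubic
  · exact mul_pos (pow_pos hp0 3) (pow_pos (by linarith) 2)

theorem pairCoeff_strictAntiOn : StrictAntiOn pairCoeff (Ioi 0) := by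
  intro x hx y hy hxy
  rw [pairCoeff, pairCoeff, div_lt_div_iff₀ hy hx]
  nlinarith

end LSHEVariance

theorem StrictAntiOn.mul_add_mul {α : Type*} [Preorder α] {f g : α → ℝ} {s : Set α}
    {a b : ℝ} (hf : StrictAntiOn f s) (hg : StrictAntiOn g s) (ha : 0 ≤ a) (hb : 0 ≤ b)
    (hab : ¬(a = 0 ∧ b = 0)) : StrictAntiOn (fun x => a * f x + b * g x) s := by
  intro x hx y hy hxy
  have hfxy := hf hx hy hxy
  have hgxy := hg hx hy hxy
  rcases ha.lt_or_eq with ha | rfl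
  · linarith [mul_lt_mul_of_pos_left hfxy ha, mul_le_mul_of_nonneg_left hgxy.le hb]
  · have hb : 0 < b := hb.lt_of_ne fun h => hab ⟨rfl, h.symm⟩
    simpa only [zero_mul, zero_add] using mul_lt_mul_of_pos_left hgxy hb

/-- The LSHE variance function is strictly decreasing on `(0, 1]` when the
nonnegative coefficients are not both zero. -/
theorem stmt_5 (a b : ℝ) (ha : 0 ≤ a) (hb : 0 ≤ b) (hab : ¬(a = 0 ∧ b = 0)) :
    StrictAntiOn
      (fun p : ℝ => a * ((p - 1) ^ 2 * (3 * p ^ 2 - p + 1) / (p ^ 2 * (3 - 2 * p)))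
        + b * ((1 - p) / p))
      (Set.Ioc (0 : ℝ) 1) :=
  LSHEVariance.tripleCoeff_strictAntiOn.mul_add_mul
    (LSHEVariance.pairCoeff_strictAntiOn.mono Ioc_subset_Ioi_self) ha hb hab
end

section
/- For minwise hashing: let $\pi$ be a uniformly random permutation of a finite universe $U$, and let $S_1, S_2 \subseteq U$ be nonempty sets. Then $\Pr[\min \pi(S_1) = \min \pi(S_2)] = \frac{|S_1 \cap S_2|}{|S_1 \cup S_2|}$. -/
/-!
Let `A = S₁ ∪ S₂` and let `x = π⁻¹ (min π(A))` be the element of `A` that `π` ranks first.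
Then `min π(S₁) = min π(S₂)` exactly when `x ∈ S₁ ∩ S₂`, since the smaller of the two minima
is `π x`. Right multiplication by the transposition `(a b)` of two elements of `A` preserves
`π(A)` and turns `x = a` into `x = b`, so `x` is uniformly distributed on `A`.
-/

open Finset

section UniformFibers

variable {ι β : Type*} [DecidableEq β]

theorem card_filter_mem_eq_card_mul (s : Finset ι) (f : ι → β) {A T : Finset β} (hTA : T ⊆ A)
    {c : ℕ} (hc : ∀ a ∈ A, #{x ∈ s | f x = a} = c) :
    #{x ∈ s | f x ∈ T} = #T * c := by
  rw [card_eq_sum_card_fiberwise (s := {x ∈ s | f x ∈ T}) (t := T) fun x hx =>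
    (mem_filter.1 hx).2]
  calc ∑ a ∈ T, #{x ∈ {x ∈ s | f x ∈ T} | f x = a}
      = ∑ a ∈ T, c := sum_congr rfl fun a ha => by
        rw [filter_filter, ← hc a (hTA ha)]
        congr 1
        exact filter_congr fun x _ => ⟨And.right, fun h => ⟨h ▸ ha, h⟩⟩
    _ = #T * c := by rw [sum_const, smul_eq_mul]

theorem card_filter_mem_div_card_univ [Fintype ι] [Nonempty ι] {K : Type*} [Semifield K]
    [CharZero K] (f : ι → β) {A T : Finset β} (hf : ∀ x, f x ∈ A) (hTA : T ⊆ A)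
    (hfib : ∀ a ∈ A, ∀ b ∈ A, #{x | f x = a} = #{x | f x = b}) :
    (#{x | f x ∈ T} : K) / #(univ : Finset ι) = #T / #A := by
  obtain ⟨x₀⟩ := ‹Nonempty ι›
  set c := #{x | f x = f x₀}
  have hc : ∀ a ∈ A, #{x | f x = a} = c := fun a ha => hfib a ha _ (hf x₀)
  have hc_pos : 0 < c := card_pos.2 ⟨x₀, mem_filter.2 ⟨mem_univ _, rfl⟩⟩
  have huniv : #(univ : Finset ι) = #A * c := by
    rw [← card_filter_mem_eq_card_mul univ f subset_rfl hc, filter_true_of_mem fun x _ => hf x]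
  rw [card_filter_mem_eq_card_mul univ f hTA hc, huniv, Nat.cast_mul, Nat.cast_mul,
    mul_div_mul_right _ _ (Nat.cast_ne_zero.2 hc_pos.ne')]

end UniformFibers

theorem Finset.image_swap_of_mem {α : Type*} [DecidableEq α] {A : Finset α} {a b : α}
    (ha : a ∈ A) (hb : b ∈ A) : A.image (Equiv.swap a b) = A := by
  refine eq_of_subset_of_card_le (fun y hy => ?_)
    (card_image_of_injective _ (Equiv.swap a b).injective).ge
  obtain ⟨x, hx, rfl⟩ := mem_image.1 hy
  rw [Equiv.swap_apply_def]
  split_ifs <;> assumption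

namespace Equiv.Perm

variable {U : Type*} [LinearOrder U] [DecidableEq U]

def argminOn (A : Finset U) (hA : A.Nonempty) (π : Perm U) : U :=
  π.symm ((A.image π).min' (hA.image π))

variable {A : Finset U} {hA : A.Nonempty}

theorem apply_argminOn (π : Perm U) : π (argminOn A hA π) = (A.image π).min' (hA.image π) :=
  π.apply_symm_apply _

theorem argminOn_mem (π : Perm U) : argminOn A hA π ∈ A := by
  obtain ⟨a, ha, hπa⟩ := mem_image.1 (min'_mem (A.image π) (hA.image π))
  rwa [argminOn, ← hπa, symm_apply_apply]

theorem min'_image_eq_min'_image_iff_argminOn_mem {S : Finset U} (hS : S.Nonempty)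
    (hSA : S ⊆ A) (π : Perm U) :
    (S.image π).min' (hS.image π) = (A.image π).min' (hA.image π) ↔ argminOn A hA π ∈ S := by
  constructor
  · intro h
    obtain ⟨a, ha, hπa⟩ := mem_image.1 (min'_mem (S.image π) (hS.image π))
    rwa [← π.injective (hπa.trans (h.trans (apply_argminOn π).symm))]
  · intro h
    refine le_antisymm (min'_le _ _ ?_) (min'_le _ _ (image_subset_image hSA (min'_mem _ _)))
    exact apply_argminOn (hA := hA) π ▸ mem_image_of_mem π h

theorem min'_image_eq_min'_image_iff {S₁ S₂ : Finset U} (h₁ : S₁.Nonempty)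
    (h₂ : S₂.Nonempty) (π : Perm U) :
    (S₁.image π).min' (h₁.image π) = (S₂.image π).min' (h₂.image π) ↔
      argminOn (S₁ ∪ S₂) (h₁.mono subset_union_left) π ∈ S₁ ∩ S₂ := by
  have hunion : ((S₁ ∪ S₂).image π).min' ((h₁.mono subset_union_left).image π) =
      (S₁.image π).min' (h₁.image π) ⊓ (S₂.image π).min' (h₂.image π) := by
    simp only [image_union]
    exact inf'_union (h₁.image π) (h₂.image π) id
  rw [mem_inter, ← min'_image_eq_min'_image_iff_argminOn_mem h₁ subset_union_left,
    ← min'_image_eq_min'_image_iff_argminOn_mem h₂ subset_union_right, hunion]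
  constructor
  · intro h
    rw [h, inf_idem]
    exact ⟨rfl, rfl⟩
  · rintro ⟨h₁', h₂'⟩
    exact h₁'.trans h₂'.symm

theorem argminOn_mul {σ : Perm U} (hσ : A.image σ = A) (π : Perm U) :
    argminOn A hA (π * σ) = σ⁻¹ (argminOn A hA π) := by
  have himage : A.image ⇑(π * σ) = A.image π := by
    rw [coe_mul, ← image_image, hσ]
  apply (π * σ).injective
  simp only [apply_argminOn, himage, mul_apply, coe_inv, apply_symm_apply]

theorem card_argminOn_eq [Fintype U] {a b : U} (ha : a ∈ A) (hb : b ∈ A) :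
    #{π : Perm U | argminOn A hA π = a} = #{π : Perm U | argminOn A hA π = b} := by
  have hmul : ∀ π : Perm U, argminOn A hA (π * swap a b) = swap a b (argminOn A hA π) :=
    fun π => by rw [argminOn_mul (image_swap_of_mem ha hb), swap_inv]
  refine card_nbij' (· * swap a b) (· * swap a b) (fun π hπ => ?_) (fun π hπ => ?_)
    (fun π _ => mul_swap_mul_self ..) (fun π _ => mul_swap_mul_self ..) <;>
  simp only [mem_coe, mem_filter, mem_univ, true_and, hmul] at hπ ⊢ <;>
  simp [hπ]

end Equiv.Perm

/-- Minwise hashing collision probability: for a uniformly random permutation `π` of a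
finite linearly ordered universe `U` and nonempty sets `S1, S2 ⊆ U`, the probability
that `min π(S1) = min π(S2)` equals the Jaccard similarity `|S1 ∩ S2| / |S1 ∪ S2|`. -/
theorem stmt_10 (U : Type) [Fintype U] [LinearOrder U] [DecidableEq U]
    (S1 S2 : Finset U) (h1 : S1.Nonempty) (h2 : S2.Nonempty) :
    ((Finset.univ.filter (fun π : Equiv.Perm U =>
        (S1.image π).min' (h1.image π) = (S2.image π).min' (h2.image π))).card : ℝ)
      / ((Finset.univ : Finset (Equiv.Perm U)).card : ℝ)
    = ((S1 ∩ S2).card : ℝ) / ((S1 ∪ S2).card : ℝ) := by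
  rw [filter_congr fun π _ => Equiv.Perm.min'_image_eq_min'_image_iff h1 h2 π]
  exact card_filter_mem_div_card_univ _ Equiv.Perm.argminOn_mem inter_subset_union
    fun a ha b hb => Equiv.Perm.card_argminOn_eq ha hb
end

section
/- Minwise hashing is a locality sensitive family for Jaccard similarity: if $x_1, x_2, y_1, y_2$ are nonempty finite subsets of a universe $U$ with $J(x_1, x_2) \geq J(y_1, y_2)$, then for a uniformly random permutation $\pi$ of $U$, $\Pr[\min\pi(x_1) = \min\pi(x_2)] \geq \Pr[\min\pi(y_1) = \min\pi(y_2)]$. -/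
/-!
Fix a permutation `π` and let `m` be the element of `x₁ ∪ x₂` that `π` sends lowest. Then
`min π(x₁) = min π(x₂)` exactly when `m ∈ x₁ ∩ x₂`. Precomposing `π` with the transposition
`(u v)` of two elements of `x₁ ∪ x₂` swaps the events `m = u` and `m = v`, so `m` is uniformly
distributed on `x₁ ∪ x₂`, and the collision probability is the Jaccard similarity
`|x₁ ∩ x₂| / |x₁ ∪ x₂|`.
-/

open Finset

theorem Finset.min'_eq_min'_iff_min'_union_mem_inter {α : Type*} [LinearOrder α] [DecidableEq α]
    {A B : Finset α} (hA : A.Nonempty) (hB : B.Nonempty) :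
    A.min' hA = B.min' hB ↔ (A ∪ B).min' (hA.mono subset_union_left) ∈ A ∩ B := by
  -- `convert`: `min'_union` uses the `DecidableEq` instance of the order, not the given one
  rw [show (A ∪ B).min' _ = A.min' hA ⊓ B.min' hB by convert min'_union hA hB, mem_inter]
  constructor
  · intro h
    rw [h, inf_idem]
    exact ⟨h ▸ A.min'_mem hA, B.min'_mem hB⟩
  · rintro ⟨hmA, hmB⟩
    exact le_antisymm (le_inf_iff.mp (A.min'_le _ hmA)).2 (le_inf_iff.mp (B.min'_le _ hmB)).1

theorem Finset.image_swap_of_mem_s11 {U : Type*} [DecidableEq U] {S : Finset U} {u v : U}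
    (hu : u ∈ S) (hv : v ∈ S) : S.image (Equiv.swap u v) = S := by
  refine eq_of_subset_of_card_le (image_subset_iff.2 fun x hx => ?_)
    (card_image_of_injective _ (Equiv.injective _)).ge
  rw [Equiv.swap_apply_def]
  split_ifs <;> assumption

namespace MinHash

variable {U : Type*} [LinearOrder U] [DecidableEq U]

def minArg (S : Finset U) (hS : S.Nonempty) (π : Equiv.Perm U) : U :=
  π.symm ((S.image π).min' (hS.image π))

section minArg

variable (S : Finset U) (hS : S.Nonempty) (π : Equiv.Perm U)

theorem apply_minArg : π (minArg S hS π) = (S.image π).min' (hS.image π) :=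
  π.apply_symm_apply _

theorem minArg_mem_iff (T : Finset U) :
    minArg S hS π ∈ T ↔ (S.image π).min' (hS.image π) ∈ T.image π := by
  rw [← apply_minArg, π.injective.mem_finset_image]

theorem minArg_mem : minArg S hS π ∈ S :=
  (minArg_mem_iff S hS π S).2 (min'_mem _ _)

theorem minArg_mul_swap {u v : U} (hu : u ∈ S) (hv : v ∈ S) :
    minArg S hS (π * Equiv.swap u v) = Equiv.swap u v (minArg S hS π) := by
  have himage : S.image (π * Equiv.swap u v) = S.image π := by
    rw [Equiv.Perm.coe_mul, ← image_image, image_swap_of_mem_s11 hu hv]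
  simp only [minArg, himage]
  rfl

end minArg

theorem min'_image_eq_min'_image_iff (A B : Finset U) (hA : A.Nonempty) (hB : B.Nonempty)
    (π : Equiv.Perm U) :
    (A.image π).min' (hA.image π) = (B.image π).min' (hB.image π) ↔
      minArg (A ∪ B) (hA.mono subset_union_left) π ∈ A ∩ B := by
  rw [min'_eq_min'_iff_min'_union_mem_inter, minArg_mem_iff, image_inter _ _ π.injective]
  simp only [image_union]

variable [Fintype U]

theorem card_filter_minArg_eq_of_mem {S : Finset U} (hS : S.Nonempty) {u v : U} (hu : u ∈ S)
    (hv : v ∈ S) :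
    #{π | minArg S hS π = u} = #{π | minArg S hS π = v} := by
  refine card_nbij' (· * Equiv.swap u v) (· * Equiv.swap u v) ?_ ?_ ?_ ?_
  all_goals intro π hπ
  all_goals simp only [coe_filter, mem_univ, true_and, Set.mem_ofPred_eq] at hπ ⊢
  · rw [minArg_mul_swap S hS π hu hv, hπ, Equiv.swap_apply_left]
  · rw [minArg_mul_swap S hS π hu hv, hπ, Equiv.swap_apply_right]
  · exact Equiv.mul_swap_mul_self u v π
  · exact Equiv.mul_swap_mul_self u v π

theorem card_filter_minArg_mem {S T : Finset U} (hS : S.Nonempty) (hT : T ⊆ S) {u : U}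
    (hu : u ∈ S) :
    #{π | minArg S hS π ∈ T} = #T * #{π | minArg S hS π = u} := by
  rw [← sum_card_fiberwise_eq_card_filter]
  exact sum_const_nat fun v hv => card_filter_minArg_eq_of_mem hS (hT hv) hu

theorem card_filter_minArg_mem_div_card_univ {S T : Finset U} (hS : S.Nonempty) (hT : T ⊆ S) :
    (#{π | minArg S hS π ∈ T} : ℝ) / #(univ : Finset (Equiv.Perm U)) = #T / #S := by
  obtain ⟨u, hu⟩ := id hS
  have huniv : #(univ : Finset (Equiv.Perm U)) = #{π | minArg S hS π ∈ S} := by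
    rw [filter_true_of_mem fun π _ => minArg_mem S hS π]
  rw [div_eq_div_iff (by simp) (by simpa using hS.ne_empty), huniv,
    card_filter_minArg_mem _ hT hu, card_filter_minArg_mem _ subset_rfl hu]
  push_cast
  ring

theorem collision_prob_eq_jaccard (A B : Finset U) (hA : A.Nonempty) (hB : B.Nonempty) :
    (#{π : Equiv.Perm U | (A.image π).min' (hA.image π) = (B.image π).min' (hB.image π)} : ℝ)
      / #(univ : Finset (Equiv.Perm U)) = #(A ∩ B) / #(A ∪ B) := by
  rw [filter_congr fun π _ => min'_image_eq_min'_image_iff A B hA hB π]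
  exact card_filter_minArg_mem_div_card_univ _ inter_subset_union

end MinHash

/-- Minwise hashing is a locality sensitive family for Jaccard similarity: if
`J(x1,x2) ≥ J(y1,y2)` then the probability (over a uniformly random permutation `π`)
that `min π(x1) = min π(x2)` is at least the probability that `min π(y1) = min π(y2)`. -/
theorem stmt_11 (U : Type) [Fintype U] [LinearOrder U] [DecidableEq U]
    (x1 x2 y1 y2 : Finset U)
    (hx1 : x1.Nonempty) (hx2 : x2.Nonempty) (hy1 : y1.Nonempty) (hy2 : y2.Nonempty)
    (hJ : ((y1 ∩ y2).card : ℝ) / ((y1 ∪ y2).card : ℝ)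
          ≤ ((x1 ∩ x2).card : ℝ) / ((x1 ∪ x2).card : ℝ)) :
    ((Finset.univ.filter (fun π : Equiv.Perm U =>
        (y1.image π).min' (hy1.image π) = (y2.image π).min' (hy2.image π))).card : ℝ)
      / ((Finset.univ : Finset (Equiv.Perm U)).card : ℝ)
    ≤ ((Finset.univ.filter (fun π : Equiv.Perm U =>
        (x1.image π).min' (hx1.image π) = (x2.image π).min' (hx2.image π))).card : ℝ)
      / ((Finset.univ : Finset (Equiv.Perm U)).card : ℝ) := by
  rw [MinHash.collision_prob_eq_jaccard y1 y2 hy1 hy2,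
    MinHash.collision_prob_eq_jaccard x1 x2 hx1 hx2]
  exact hJ
end

section
/- In the edge-sampling model with probability $p \in (0,1]$, the expected number of observed singletons satisfies $\mathbb{E}[n_1'] = n_1^* + 2 n_2^*(1-p) + 3 n_3^*(1-p)^2$, assuming cliques of size $\geq 4$ contribute no singletons. -/
/-!
Under the sampling weight the edges are independent Bernoulli(`p`) variables, so the expected
number of cliques in a given state is the number of cliques times the probability of that state.
A 2-clique loses its edge with probability `1 - p`; a triangle keeps exactly `k` of its edges with
probability `(3 choose k) p^k (1-p)^(3-k)`, and `3 p (1-p)^2 + 3 (1-p)^3 = 3 (1-p)^2`.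
-/

open Finset

section ProductWeights

variable {α β : Type*} [Fintype α] [Fintype β]

theorem sum_prod_type_mul_mul_add {u : α → ℝ} {v : β → ℝ} (hu : ∑ a, u a = 1) (hv : ∑ b, v b = 1)
    (f : α → ℝ) (g : β → ℝ) :
    ∑ x : α × β, u x.1 * v x.2 * (f x.1 + g x.2) = ∑ a, u a * f a + ∑ b, v b * g b := by
  simp_rw [Fintype.sum_prod_type, mul_add, sum_add_distrib, mul_right_comm (u _) (v _),
    mul_assoc, ← mul_sum, ← sum_mul, hv, hu, mul_one, one_mul, mul_comm (g _)]

variable [DecidableEq α]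

theorem sum_pi_prod_eq_one_s13 {g : β → ℝ} (hg : ∑ b, g b = 1) :
    ∑ f : α → β, ∏ i, g (f i) = 1 := by
  rw [← Fintype.prod_sum fun _ => g]
  simp [hg]

theorem sum_pi_prod_mul_apply {g : β → ℝ} (hg : ∑ b, g b = 1) (h : β → ℝ) (i₀ : α) :
    ∑ f : α → β, (∏ i, g (f i)) * h (f i₀) = ∑ b, g b * h b := by
  have marginal (i : α) :
      ∑ b, g b * (if i = i₀ then h b else 1) = if i = i₀ then ∑ b, g b * h b else 1 := by
    split_ifs <;> simp [hg]
  calc ∑ f : α → β, (∏ i, g (f i)) * h (f i₀)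
      = ∑ f : α → β, ∏ i, g (f i) * (if i = i₀ then h (f i) else 1) := by
        simp only [prod_mul_distrib, prod_ite_eq', mem_univ, if_true]
    _ = ∏ i, ∑ b, g b * (if i = i₀ then h b else 1) :=
        (Fintype.prod_sum fun i b => g b * if i = i₀ then h b else 1).symm
    _ = ∑ b, g b * h b := by simp only [marginal, prod_ite_eq', mem_univ, if_true]

theorem sum_pi_prod_mul_card_filter {g : β → ℝ} (hg : ∑ b, g b = 1) (P : β → Prop)
    [DecidablePred P] :
    ∑ f : α → β, (∏ i, g (f i)) * (#{i | P (f i)} : ℝ) = Fintype.card α * ∑ b with P b, g b := by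
  simp_rw [natCast_card_filter, mul_sum]
  rw [sum_comm]
  simp_rw [sum_pi_prod_mul_apply hg (fun b => if P b then (1 : ℝ) else 0), mul_ite, mul_one,
    mul_zero, ← sum_filter, sum_const, card_univ, nsmul_eq_mul, mul_sum]

end ProductWeights

theorem sum_prod_bernoulli_card_eq {α : Type*} [Fintype α] [DecidableEq α] (p : ℝ) (k : ℕ) :
    ∑ b : α → Bool with #{e | b e = true} = k, ∏ e, (if b e then p else 1 - p)
      = (Fintype.card α).choose k * p ^ k * (1 - p) ^ (Fintype.card α - k) := by
  have hprod (b : α → Bool) : ∏ e, (if b e then p else 1 - p)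
      = p ^ #{e | b e = true} * (1 - p) ^ (Fintype.card α - #{e | b e = true}) := by
    rw [prod_ite, prod_const, prod_const, ← card_univ,
      ← card_filter_add_card_filter_not (s := univ) (fun e => b e = true), Nat.add_sub_cancel_left]
  have hcard : #{b : α → Bool | #{e | b e = true} = k} = (Fintype.card α).choose k := by
    rw [← card_univ, ← card_powersetCard]
    refine card_nbij' (fun b => ({e | b e = true} : Finset α)) (fun s e => decide (e ∈ s))
      ?_ ?_ ?_ ?_ <;> intro x hx <;> simp_all
  rw [sum_congr rfl fun b hb => by rw [hprod, (mem_filter.1 hb).2], sum_const, hcard,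
    nsmul_eq_mul]
  ring

theorem stmt_13_general (n1 n2 n3 : ℕ) (p : ℝ) :
    let w : (Fin n2 → Bool) × (Fin n3 → Fin 3 → Bool) → ℝ := fun ω =>
      (∏ i, if ω.1 i then p else 1 - p) * ∏ i, ∏ e, if ω.2 i e then p else 1 - p
    let n1' : (Fin n2 → Bool) × (Fin n3 → Fin 3 → Bool) → ℝ := fun ω =>
      (n1 : ℝ) + 2 * ((Finset.univ.filter (fun i => ω.1 i = false)).card : ℝ) +
      ((Finset.univ.filter
          (fun i => (Finset.univ.filter (fun e => ω.2 i e = true)).card = 1)).card : ℝ) +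
      3 * ((Finset.univ.filter
          (fun i => (Finset.univ.filter (fun e => ω.2 i e = true)).card = 0)).card : ℝ)
    (∑ ω, w ω * n1' ω) = n1 + 2 * n2 * (1 - p) + 3 * n3 * (1 - p) ^ 2 := by
  intro w n1'
  have hedge : ∑ b : Bool, (if b then p else 1 - p) = 1 := by simp
  have hclique : ∑ b : Fin 3 → Bool, ∏ e, (if b e then p else 1 - p) = 1 :=
    sum_pi_prod_eq_one_s13 (α := Fin 3) hedge
  have hdead : ∑ a : Fin n2 → Bool, (∏ i, if a i then p else 1 - p) * (#{i | a i = false} : ℝ)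
      = n2 * (1 - p) := by
    rw [sum_pi_prod_mul_card_filter hedge (· = false), filter_eq', Fintype.card_fin]
    simp
  have hsurvive (k : ℕ) :
      ∑ b : Fin n3 → Fin 3 → Bool,
        (∏ i, ∏ e, if b i e then p else 1 - p) * (#{i | #{e | b i e = true} = k} : ℝ)
      = n3 * ((3 : ℕ).choose k * p ^ k * (1 - p) ^ (3 - k)) := by
    rw [sum_pi_prod_mul_card_filter hclique fun b => #{e | b e = true} = k,
      sum_prod_bernoulli_card_eq, Fintype.card_fin, Fintype.card_fin]
  have hpairs : ∑ a : Fin n2 → Bool, ∏ i, (if a i then p else 1 - p) = 1 :=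
    sum_pi_prod_eq_one_s13 hedge
  have htriangles : ∑ b : Fin n3 → Fin 3 → Bool, ∏ i, ∏ e, (if b i e then p else 1 - p) = 1 :=
    sum_pi_prod_eq_one_s13 hclique
  have hsplit := sum_prod_type_mul_mul_add hpairs htriangles
    (fun a => n1 + 2 * (#{i | a i = false} : ℝ))
    (fun b => (#{i | #{e | b i e = true} = 1} : ℝ) + 3 * #{i | #{e | b i e = true} = 0})
  simp only [add_assoc] at hsplit
  simp only [w, n1', add_assoc]
  rw [hsplit]
  simp only [mul_add, sum_add_distrib, ← sum_mul, mul_left_comm _ (2 : ℝ),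
    mul_left_comm _ (3 : ℝ), ← mul_sum, hdead, hsurvive, hpairs]
  norm_num
  ring

/-- Expected number of observed singletons under independent edge sampling with
probability `p` on a disjoint union of cliques (`n1` singletons, `n2` 2-cliques,
`n3` 3-cliques; cliques of size ≥ 4 contribute no singletons):
`E[n₁'] = n₁ + 2 n₂ (1-p) + 3 n₃ (1-p)²`. A true singleton stays a singleton; a
2-clique yields 2 singletons iff its edge dies; a 3-clique yields 1 singleton iff
exactly one of its edges survives and 3 singletons iff none survives. -/
theorem stmt_13 (n1 n2 n3 : ℕ) (p : ℝ) (hp : p ∈ Set.Ioc (0 : ℝ) 1) :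
    let w : (Fin n2 → Bool) × (Fin n3 → Fin 3 → Bool) → ℝ := fun ω =>
      (∏ i, if ω.1 i then p else 1 - p) * ∏ i, ∏ e, if ω.2 i e then p else 1 - p
    let n1' : (Fin n2 → Bool) × (Fin n3 → Fin 3 → Bool) → ℝ := fun ω =>
      (n1 : ℝ) + 2 * ((Finset.univ.filter (fun i => ω.1 i = false)).card : ℝ) +
      ((Finset.univ.filter
          (fun i => (Finset.univ.filter (fun e => ω.2 i e = true)).card = 1)).card : ℝ) +
      3 * ((Finset.univ.filter
          (fun i => (Finset.univ.filter (fun e => ω.2 i e = true)).card = 0)).card : ℝ)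
    (∑ ω, w ω * n1' ω) = n1 + 2 * n2 * (1 - p) + 3 * n3 * (1 - p) ^ 2 :=
  stmt_13_general n1 n2 n3 p
end

section
/- For any $p \in (0,1]$ and nonnegative integers $a = n_3^*$, $b = n_2^*$: if $V_{\mathrm{adaptive}}(p)$ denotes the LSHE variance $a \frac{(p-1)^2(3p^2-p+1)}{p^2(3-2p)} + b \frac{1-p}{p}$ and $q \in (0, p)$, then $V_{\mathrm{adaptive}}(p) \leq V_{\mathrm{adaptive}}(q)$, i.e., a sampler achieving higher edge-inclusion probability yields an estimator with no larger variance. -/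
/-!
Write the variance as `V(p) = (1 - p)/p · (a k(p) + b)` with
`k(p) = (1 - p)(3p² - p + 1) / (p(3 - 2p))`. Both factors are nonnegative and antitone on `(0, 1]`,
hence so is their product. For `k`, clearing denominators, `k(q) - k(p)` has the sign of
`(p - q) H(p, q)` where `H` is a polynomial positive on the unit square.
-/

noncomputable section

def oddsAgainst (p : ℝ) : ℝ := (1 - p) / p

def tripletFactor (p : ℝ) : ℝ := (1 - p) * (3 * p ^ 2 - p + 1) / (p * (3 - 2 * p))

def lshVariance (a b : ℕ) (p : ℝ) : ℝ :=
  a * ((p - 1) ^ 2 * (3 * p ^ 2 - p + 1) / (p ^ 2 * (3 - 2 * p))) + b * ((1 - p) / p)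

end

lemma lshVariance_eq_oddsAgainst_mul (a b : ℕ) (p : ℝ) :
    lshVariance a b p = oddsAgainst p * (a * tripletFactor p + b) := by
  simp only [lshVariance, oddsAgainst, tripletFactor, div_eq_mul_inv, mul_inv]
  ring

lemma antitoneOn_oddsAgainst : AntitoneOn oddsAgainst (Set.Ioi 0) := by
  intro q (hq : 0 < q) p (hp : 0 < p) hqp
  simp only [oddsAgainst, sub_div, div_self hp.ne', div_self hq.ne']
  gcongr

lemma oddsAgainst_nonneg {p : ℝ} (hp : p ∈ Set.Ioc 0 1) : 0 ≤ oddsAgainst p :=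
  div_nonneg (sub_nonneg.2 hp.2) hp.1.le

lemma tripletFactor_nonneg {p : ℝ} (hp : p ∈ Set.Ioc 0 1) : 0 ≤ tripletFactor p := by
  obtain ⟨hp0, hp1⟩ := hp
  apply div_nonneg <;> nlinarith

lemma tripletFactor_cross_poly_nonneg {p q : ℝ} (hp : p ∈ Set.Ioc 0 1) (hq : q ∈ Set.Ioc 0 1) :
    0 ≤ 3 - 2 * (p + q) - 8 * (p * q) + 9 * (p * q) * (p + q) - 6 * (p * q) ^ 2 := by
  obtain ⟨hp0, hp1⟩ := hp
  obtain ⟨hq0, hq1⟩ := hq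
  have hpq := mul_pos hp0 hq0
  have h11 := mul_nonneg (sub_nonneg.2 hp1) (sub_nonneg.2 hq1)
  nlinarith [mul_nonneg hpq.le h11, sq_nonneg (p + q - 6 / 5), sq_nonneg (p - q)]

lemma antitoneOn_tripletFactor : AntitoneOn tripletFactor (Set.Ioc 0 1) := by
  intro q hq p hp hqp
  have hH := tripletFactor_cross_poly_nonneg hp hq
  obtain ⟨hp0, hp1⟩ := hp
  obtain ⟨hq0, hq1⟩ := hq
  unfold tripletFactor
  rw [div_le_div_iff₀ (by nlinarith) (by nlinarith)]
  nlinarith [mul_nonneg (sub_nonneg.2 hqp) hH]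

lemma antitoneOn_lshVariance (a b : ℕ) : AntitoneOn (lshVariance a b) (Set.Ioc 0 1) := by
  intro q hq p hp hqp
  simp only [lshVariance_eq_oddsAgainst_mul]
  have hk : (a : ℝ) * tripletFactor p + b ≤ a * tripletFactor q + b := by
    gcongr
    exact antitoneOn_tripletFactor hq hp hqp
  exact mul_le_mul (antitoneOn_oddsAgainst hq.1 hp.1 hqp) hk
    (by have := tripletFactor_nonneg hp; positivity) (oddsAgainst_nonneg hq)

/-- Higher edge-inclusion probability yields no larger variance for the LSH estimator. -/
theorem stmt_18 (a b : ℕ) (p q : ℝ) (hp : p ∈ Set.Ioc (0 : ℝ) 1) (hq : q ∈ Set.Ioo (0 : ℝ) p) :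
    (a : ℝ) * ((p - 1) ^ 2 * (3 * p ^ 2 - p + 1) / (p ^ 2 * (3 - 2 * p)))
        + (b : ℝ) * ((1 - p) / p)
      ≤ (a : ℝ) * ((q - 1) ^ 2 * (3 * q ^ 2 - q + 1) / (q ^ 2 * (3 - 2 * q)))
        + (b : ℝ) * ((1 - q) / q) :=
  antitoneOn_lshVariance a b ⟨hq.1, hq.2.le.trans hp.2⟩ hp hq.2.le
end
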